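/- arXiv:2511.06308 — 4 statements merged into one kernel-verified Lean document; each statement's English description precedes it below -/
import Mathlib

section
/- Let B ∈ ℚ[[x,y]] be a formal power series in two variables satisfying B = 1 + x·y·B²·(x·B² − (x−1)·(B−1)). Then the coefficient of x^0 y^m in B equals 1 if m = 0 and 0 if m ≥ 1, the coefficient of x^n y^0 equals 0 for n ≥ 1, and for all integers n ≥ 1 and m ≥ 1 the coefficient of x^n y^m in B equals (1/m)·C(m, n−m)·Σ_{j=0}^{n−m} C(n−m, j)·C(n+m−j, 2m+j+1). -/
/-!
Regard `B` as a power series in `y` over `ℚ⟦x⟧`. Then `f = B - 1` satisfies `f = y φ(f)` with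
`φ(t) = x (1 + t)² (x (1 + t)² - (x - 1) t) = x (1 + t)² (x (1 + t + t²) + t)`, so Lagrange inversion
gives `m [y^m] f = [t^(m-1)] φ^m`. By the binomial theorem
`φ^m = Σ_k C(m,k) x^(m+k) (1 + t)^(2m) (1 + t + t²)^k t^(m-k)`, so the coefficient of `x^n` comes
from `k = n - m` alone, and expanding `1 + t + t² = t² + (1 + t)` once more produces the sum over `j`.

Lagrange inversion itself is proved by strong induction on `n`: writing `f^k = X^k φ(f)^k`, the
induction hypothesis turns `n [X^(n+k)] f^k` into `[t^n] (t (φ^k)' φ^n)`, and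
`(n + k) (φ^k)' φ^n = k (φ^(n+k))'`.
-/

open Finset

namespace Polynomial

variable {R : Type*} [CommSemiring R]

theorem coeff_X_mul_derivative (p : R[X]) (n : ℕ) :
    (X * derivative p).coeff n = n * p.coeff n := by
  cases n with
  | zero => simp
  | succ n => rw [coeff_X_mul, coeff_derivative]; push_cast; ring

theorem coeff_X_mul_derivative_mul (p q : R[X]) (n : ℕ) :
    (X * derivative p * q).coeff n = ∑ j ∈ range (n + 1), j * p.coeff j * q.coeff (n - j) := by
  rw [coeff_mul, Nat.sum_antidiagonal_eq_sum_range_succ_mk]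
  simp only [coeff_X_mul_derivative]

theorem C_mul_X_mul_derivative_pow_mul_pow (p : R[X]) (n k : ℕ) :
    C ((n + k : ℕ) : R) * (X * derivative (p ^ k) * p ^ n) =
      C (k : R) * (X * derivative (p ^ (n + k))) := by
  rcases k with _ | k
  · simp
  rw [← add_assoc, derivative_pow_succ, derivative_pow_succ, pow_add]
  push_cast
  simp only [map_add, map_natCast, map_one]
  ring

theorem coeff_one_add_X_pow_mul_one_add_X_add_X_sq_pow {m a : ℕ} (hm : 1 ≤ m) (ha : a ≤ m) :
    ((1 + X) ^ (2 * m) * (1 + X + X ^ 2) ^ a * X ^ (m - a) : R[X]).coeff (m - 1) =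
      ∑ j ∈ range (a + 1), (a.choose j * (2 * m + a - j).choose (2 * m + j + 1) : R) := by
  rw [show (1 + X + X ^ 2 : R[X]) = X ^ 2 + (1 + X) by ring, add_pow (X ^ 2 : R[X]) (1 + X) a,
    mul_sum, sum_mul, finsetSum_coeff]
  refine sum_congr rfl fun j hj => ?_
  have hj : j ≤ a := Nat.lt_succ_iff.mp (mem_range.mp hj)
  have hterm : (1 + X : R[X]) ^ (2 * m) * ((X ^ 2) ^ j * (1 + X) ^ (a - j) * (a.choose j : R[X]))
        * X ^ (m - a) = C (a.choose j : R) * ((1 + X) ^ (2 * m + a - j) * X ^ (m - a + 2 * j)) := by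
    rw [Nat.add_sub_assoc hj, pow_add, ← pow_mul, pow_add, ← map_natCast C]
    ring
  rw [hterm, coeff_C_mul, coeff_mul_X_pow', coeff_one_add_X_pow]
  split_ifs with h
  · rw [Nat.choose_symm_of_eq_add (n := 2 * m + a - j) (b := 2 * m + j + 1) (by omega)]
  · rw [Nat.choose_eq_zero_of_lt (n := 2 * m + a - j) (by omega), Nat.cast_zero, mul_zero]

end Polynomial

namespace PowerSeries

variable {A : Type*} [CommRing A]

-- Substitution is written `eval₂ C` rather than `aeval`: on `ℚ⟦X⟧⟦X⟧` the instance
-- `PowerSeries.algebraPowerSeries` lets `ℚ⟦X⟧` act coefficientwise, not through `C`.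
theorem coeff_eval₂_C_eq_sum_range {f : A⟦X⟧} (hf : constantCoeff f = 0) (p : Polynomial A)
    (n : ℕ) : coeff n (p.eval₂ C f) = ∑ j ∈ range (n + 1), p.coeff j * coeff n (f ^ j) := by
  have hvanish : ∀ j, n < j → coeff n (f ^ j) = 0 := fun j hj =>
    X_pow_dvd_iff.mp (pow_dvd_pow_of_dvd (X_dvd_iff.mpr hf) j) n hj
  rw [Polynomial.eval₂_eq_sum_range' C (n := max p.natDegree n + 1) (by omega), map_sum]
  simp_rw [coeff_C_mul]
  refine (sum_subset (range_subset_range.mpr (by omega)) fun j _ hj => ?_).symm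
  rw [hvanish j (by simpa using hj), mul_zero]

variable {f : A⟦X⟧} {φ : Polynomial A}

theorem coeff_pow_eq_sum_of_eq_X_mul_eval₂ (hf : f = X * φ.eval₂ C f) (n k : ℕ) :
    coeff (n + k) (f ^ k) = ∑ j ∈ range (n + 1), (φ ^ k).coeff j * coeff n (f ^ j) := by
  have hf0 : constantCoeff f = 0 := by rw [hf]; simp
  have hfk : f ^ k = X ^ k * (φ ^ k).eval₂ C f := by
    conv_lhs => rw [hf]
    rw [mul_pow, Polynomial.eval₂_pow]
  rw [hfk, coeff_X_pow_mul, coeff_eval₂_C_eq_sum_range hf0]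

theorem lagrange_inversion [Algebra ℚ A] (hf : f = X * φ.eval₂ C f) (n k : ℕ)
    (hk : 1 ≤ k) : ((n + k : ℕ) : A) * coeff (n + k) (f ^ k) = k * (φ ^ (n + k)).coeff n := by
  induction n using Nat.strong_induction_on generalizing k with
  | _ n ih =>
  rcases Nat.eq_zero_or_pos n with rfl | hn
  · have h := coeff_pow_eq_sum_of_eq_X_mul_eval₂ hf 0 k
    rw [zero_add] at h
    simp [h]
  have hterm : ∀ j ∈ range (n + 1), (φ ^ k).coeff j * ((n : A) * coeff n (f ^ j)) =
      j * (φ ^ k).coeff j * (φ ^ n).coeff (n - j) := by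
    intro j hj
    rcases Nat.eq_zero_or_pos j with rfl | hj0
    · simp [coeff_one, hn.ne']
    have h := ih (n - j) (by omega) j hj0
    rw [Nat.sub_add_cancel (by simpa [Nat.lt_succ_iff] using hj)] at h
    rw [h]; ring
  have hsum : (n : A) * coeff (n + k) (f ^ k) =
      (Polynomial.X * Polynomial.derivative (φ ^ k) * φ ^ n).coeff n := by
    rw [coeff_pow_eq_sum_of_eq_X_mul_eval₂ hf, mul_sum, Polynomial.coeff_X_mul_derivative_mul]
    refine sum_congr rfl fun j hj => ?_
    rw [← hterm j hj]; ring
  have hpoly := congrArg (Polynomial.coeff · n)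
    (Polynomial.C_mul_X_mul_derivative_pow_mul_pow φ n k)
  simp only [Polynomial.coeff_C_mul, Polynomial.coeff_X_mul_derivative, ← hsum] at hpoly
  have hunit : IsUnit (n : A) := by
    simpa using (IsUnit.mk0 (n : ℚ) (by exact_mod_cast hn.ne')).map (algebraMap ℚ A)
  refine hunit.mul_left_cancel ?_
  linear_combination hpoly

end PowerSeries

section LagrangeKernel

open Polynomial

noncomputable def lagrangeKernel : (PowerSeries ℚ)[X] :=
  C PowerSeries.X * (1 + X) ^ 2 * (C PowerSeries.X * (1 + X + X ^ 2) + X)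

theorem eval₂_lagrangeKernel (g : PowerSeries (PowerSeries ℚ)) :
    lagrangeKernel.eval₂ PowerSeries.C g = PowerSeries.C PowerSeries.X * (1 + g) ^ 2 *
      (PowerSeries.C PowerSeries.X * (1 + g + g ^ 2) + g) := by
  simp only [lagrangeKernel, eval₂_mul, eval₂_add, eval₂_pow, eval₂_C, eval₂_X, eval₂_one]

theorem lagrangeKernel_pow (m : ℕ) : lagrangeKernel ^ m = ∑ k ∈ range (m + 1),
    C (PowerSeries.C (m.choose k : ℚ) * PowerSeries.X ^ (m + k)) *
      ((1 + X) ^ (2 * m) * (1 + X + X ^ 2) ^ k * X ^ (m - k)).map PowerSeries.C := by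
  rw [lagrangeKernel, mul_pow, mul_pow, add_pow (C PowerSeries.X * (1 + X + X ^ 2)) X m, mul_sum]
  refine sum_congr rfl fun k _ => ?_
  simp only [Polynomial.map_mul, Polynomial.map_pow, Polynomial.map_add, Polynomial.map_one,
    Polynomial.map_X, map_mul, map_pow, map_natCast, mul_pow, ← pow_mul]
  ring

theorem coeff_coeff_lagrangeKernel_pow {m : ℕ} (hm : 1 ≤ m) (n : ℕ) :
    PowerSeries.coeff n ((lagrangeKernel ^ m).coeff (m - 1)) =
      m.choose (n - m) * ∑ j ∈ range (n - m + 1),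
        ((n - m).choose j * (n + m - j).choose (2 * m + j + 1) : ℚ) := by
  set c : ℕ → ℚ := fun k =>
    m.choose k * ((1 + X) ^ (2 * m) * (1 + X + X ^ 2) ^ k * X ^ (m - k) : ℚ[X]).coeff (m - 1)
  have hsum : PowerSeries.coeff n ((lagrangeKernel ^ m).coeff (m - 1)) =
      ∑ k ∈ range (m + 1), if n = m + k then c k else 0 := by
    rw [lagrangeKernel_pow, finsetSum_coeff, map_sum]
    refine sum_congr rfl fun k _ => ?_
    rw [coeff_C_mul, coeff_map, ← PowerSeries.coeff_C_mul_X_pow]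
    congr 1
    simp only [c, map_mul]
    ring
  rw [hsum, sum_eq_single (n - m)]
  · by_cases hmn : m ≤ n
    · rw [if_pos (by omega)]
      by_cases hnm : n - m ≤ m
      · simp only [c, coeff_one_add_X_pow_mul_one_add_X_add_X_sq_pow hm hnm]
        congr 2 with j
        rw [show 2 * m + (n - m) - j = n + m - j by omega]
      · simp [c, Nat.choose_eq_zero_of_lt (not_le.mp hnm)]
    · rw [if_neg (by omega), Nat.sub_eq_zero_of_le (by omega), sum_range_one,
        Nat.choose_eq_zero_of_lt (n := n + m - 0) (by omega)]
      simp
  · intro k _ hk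
    rw [if_neg (by omega)]
  · intro hk
    rw [mem_range, not_lt] at hk
    simp [c, Nat.choose_eq_zero_of_lt (n := m) (k := n - m) (by omega)]

end LagrangeKernel

def swapVars : Fin 2 ≃ Option Unit :=
  (finSuccEquiv' 1).trans (Equiv.optionCongr (Equiv.ofUnique (Fin 1) Unit))

theorem swapVars_zero : swapVars 0 = some () := rfl

theorem swapVars_one : swapVars 1 = none := rfl

noncomputable def toIterated : MvPowerSeries (Fin 2) ℚ ≃ₐ[ℚ] PowerSeries (PowerSeries ℚ) :=
  (MvPowerSeries.renameEquiv ℚ swapVars).trans (MvPowerSeries.optionEquivLeft Unit ℚ)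

theorem coeff_coeff_toIterated (p : MvPowerSeries (Fin 2) ℚ) (n m : ℕ) :
    PowerSeries.coeff n (PowerSeries.coeff m (toIterated p)) =
      MvPowerSeries.coeff (Finsupp.single 0 n + Finsupp.single 1 m) p := by
  have h : (Finsupp.single () n).optionElim m =
      (Finsupp.single (0 : Fin 2) n + Finsupp.single 1 m).embDomain swapVars.toEmbedding := by
    ext a; cases a <;> simp [swapVars_zero, swapVars_one]
  show MvPowerSeries.coeff (Finsupp.single () n) _ = _
  rw [toIterated, AlgEquiv.trans_apply, MvPowerSeries.coeff_coeff_optionEquivLeft, h]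
  exact MvPowerSeries.coeff_embDomain_rename _ _ _

theorem toIterated_X_zero : toIterated (MvPowerSeries.X 0) = PowerSeries.C PowerSeries.X := by
  simp [toIterated, swapVars_zero, MvPowerSeries.rename_X]
  rfl

theorem toIterated_X_one : toIterated (MvPowerSeries.X 1) = PowerSeries.X := by
  simp [toIterated, swapVars_one, MvPowerSeries.rename_X]

theorem toIterated_sub_one_eq_X_mul_eval₂ {B : MvPowerSeries (Fin 2) ℚ}
    (hB : B = 1 + (MvPowerSeries.X 0) * (MvPowerSeries.X 1) * B ^ 2 *
      ((MvPowerSeries.X 0) * B ^ 2 - ((MvPowerSeries.X 0) - 1) * (B - 1))) :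
    toIterated B - 1 = PowerSeries.X * lagrangeKernel.eval₂ PowerSeries.C (toIterated B - 1) := by
  have h := congrArg toIterated hB
  simp only [map_add, map_one, map_mul, map_sub, map_pow, toIterated_X_zero,
    toIterated_X_one] at h
  rw [eval₂_lagrangeKernel]
  linear_combination h

theorem natCast_mul_coeff_coeff_of_sub_one_eq {F : PowerSeries (PowerSeries ℚ)}
    (hF : F - 1 = PowerSeries.X * lagrangeKernel.eval₂ PowerSeries.C (F - 1)) {m : ℕ}
    (hm : 1 ≤ m) (n : ℕ) :
    (m : ℚ) * PowerSeries.coeff n (PowerSeries.coeff m F) =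
      m.choose (n - m) * ∑ j ∈ range (n - m + 1),
        ((n - m).choose j * (n + m - j).choose (2 * m + j + 1) : ℚ) := by
  have h := PowerSeries.lagrange_inversion hF (m - 1) 1 le_rfl
  rw [Nat.sub_add_cancel hm, pow_one, Nat.cast_one, one_mul] at h
  rw [← coeff_coeff_lagrangeKernel_pow hm, ← h, map_sub, PowerSeries.coeff_one,
    if_neg (by omega), sub_zero, ← map_natCast PowerSeries.C, PowerSeries.coeff_C_mul]

theorem stmt1 (B : MvPowerSeries (Fin 2) ℚ)
    (hB : B = 1 + (MvPowerSeries.X 0) * (MvPowerSeries.X 1) * B ^ 2 *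
      ((MvPowerSeries.X 0) * B ^ 2 - ((MvPowerSeries.X 0) - 1) * (B - 1))) :
    (∀ m : ℕ, MvPowerSeries.coeff (R := ℚ) (Finsupp.single (1 : Fin 2) m) B
        = if m = 0 then 1 else 0) ∧
    (∀ n : ℕ, 1 ≤ n → MvPowerSeries.coeff (R := ℚ) (Finsupp.single (0 : Fin 2) n) B = 0) ∧
    (∀ n m : ℕ, 1 ≤ n → 1 ≤ m →
      MvPowerSeries.coeff (R := ℚ)
          (Finsupp.single (0 : Fin 2) n + Finsupp.single (1 : Fin 2) m) B
        = (1 / (m : ℚ)) * (Nat.choose m (n - m)) *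
          ∑ j ∈ Finset.range (n - m + 1),
            (Nat.choose (n - m) j : ℚ) * (Nat.choose (n + m - j) (2 * m + j + 1))) := by
  have hF := toIterated_sub_one_eq_X_mul_eval₂ hB
  have hF0 : PowerSeries.coeff 0 (toIterated B) = 1 := by
    simpa [sub_eq_zero] using congrArg (PowerSeries.coeff 0) hF
  have key (n m : ℕ) (hm : 1 ≤ m) := natCast_mul_coeff_coeff_of_sub_one_eq hF hm n
  simp only [coeff_coeff_toIterated] at key
  refine ⟨fun m => ?_, fun n hn => ?_, fun n m _ hm => ?_⟩
  · rcases Nat.eq_zero_or_pos m with rfl | hm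
    · simpa [hF0] using (coeff_coeff_toIterated B 0 0).symm
    · have h := key 0 m hm
      rw [Nat.zero_sub, sum_range_one, Nat.choose_eq_zero_of_lt (n := 0 + m - 0) (by omega)] at h
      simpa [hm.ne'] using h
  · have hn0 : n ≠ 0 := by omega
    simpa [hF0, PowerSeries.coeff_one, hn0] using (coeff_coeff_toIterated B n 0).symm
  · rw [mul_assoc, ← key n m hm]
    field_simp
end

section
/- For every integer m ≥ 1, there is a bijection between the set of inversion sequences (of any length) avoiding both patterns 102 and 000 with dist equal to m and rank equal to 0, and the set of inversion sequences (of any length) avoiding both patterns 102 and 000 with dist equal to m and exactly one index p with e_p = max(e); in particular these two sets have the same cardinality. Explicitly, if e has rank 0 and its maximum occurs twice, deleting the entry at position prmx(e) yields the corresponding sequence with a unique maximum, and if the maximum of e occurs once, e corresponds to itself. -/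
/-- `l` is an inversion sequence: the `i`-th entry (0-indexed) is at most `i`
(in particular every entry is a nonnegative integer). -/
def IsInvSeq (l : List ℕ) : Prop :=
  ∀ i < l.length, l.getD i 0 ≤ i

/-- `l` contains the pattern 102: there are indices `i < j < k` with
`l_j < l_i < l_k`. -/
def Contains102 (l : List ℕ) : Prop :=
  ∃ i j k, i < j ∧ j < k ∧ k < l.length ∧
    l.getD j 0 < l.getD i 0 ∧ l.getD i 0 < l.getD k 0

/-- `l` contains the pattern 000: there are indices `i < j < k` with
`l_i = l_j = l_k`. -/
def Contains000 (l : List ℕ) : Prop :=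
  ∃ i j k, i < j ∧ j < k ∧ k < l.length ∧
    l.getD i 0 = l.getD j 0 ∧ l.getD j 0 = l.getD k 0

/-- The maximum entry of `l` (`0` for the empty list). -/
def listMax (l : List ℕ) : ℕ := l.foldr max 0

/-- The 0-based index of the first descent of `l`, with the convention that
the entry following the last one is `-1`.  The 1-indexed statistic `prmx`
of a nonempty list equals `prmx0 + 1`. -/
def prmx0 : List ℕ → ℕ
  | [] => 0
  | [_] => 0
  | a :: b :: t => if b < a then 0 else prmx0 (b :: t) + 1

/-- `rank(e) = prmx(e) − max(e) − 1 = prmx0(e) − max(e)`; for a `102`-avoiding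
inversion sequence this is a nonnegative integer, and the empty sequence has
rank `0`. -/
def invRank (l : List ℕ) : ℕ := prmx0 l - listMax l


/-!
For a `102`-avoiding sequence the first descent sits at a maximal entry, and in an inversion
sequence the position of an entry is at least its value; so rank `0` says that the first
descent is at position `max e`. If the maximum occurs twice, deleting the copy at that position
preserves the avoidance properties and the set of values, leaves a unique maximum, and brings
the smaller entry after the descent to position `max e`, so the rank becomes positive.
Conversely, a sequence with a unique maximum `M` and positive rank has its maximum strictly
after position `M`; inserting a second `M` at position `M` creates no `102` and yields rank `0`.
The two operations are mutually inverse, and sequences with a unique maximum and rank `0` are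
fixed by both.
-/

open List

section ListMax

lemma listMax_cons (a : ℕ) (l : List ℕ) : listMax (a :: l) = max a (listMax l) := rfl

lemma listMax_le_iff {l : List ℕ} {b : ℕ} : listMax l ≤ b ↔ ∀ x ∈ l, x ≤ b := by
  induction l with
  | nil => simp [listMax]
  | cons a l ih => simp [listMax_cons, ih]

lemma le_listMax {l : List ℕ} {x : ℕ} (h : x ∈ l) : x ≤ listMax l :=
  listMax_le_iff.1 le_rfl x h

lemma listMax_mem {l : List ℕ} (h : l ≠ []) : listMax l ∈ l := by
  induction l with
  | nil => exact absurd rfl h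
  | cons a l ih =>
    rcases eq_or_ne l [] with rfl | hl
    · simp [listMax]
    · rcases le_total a (listMax l) with ha | ha
      · rw [listMax_cons, max_eq_right ha]; exact mem_cons_of_mem _ (ih hl)
      · rw [listMax_cons, max_eq_left ha]; exact mem_cons_self

lemma listMax_perm {l l' : List ℕ} (h : l ~ l') : listMax l = listMax l' :=
  le_antisymm (listMax_le_iff.2 fun _ hx => le_listMax (h.subset hx))
    (listMax_le_iff.2 fun _ hx => le_listMax (h.symm.subset hx))

end ListMax

lemma ne_nil_of_count_pos {α : Type*} [BEq α] [LawfulBEq α] {l : List α} {x : α}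
    (h : 0 < l.count x) : l ≠ [] :=
  ne_nil_of_mem (count_pos_iff.1 h)

lemma getD_mem {α : Type*} {l : List α} {i : ℕ} (d : α) (h : i < l.length) :
    l.getD i d ∈ l := by
  rw [getD_eq_getElem _ _ h]; exact getElem_mem _

lemma getD_le_listMax (l : List ℕ) (i : ℕ) : l.getD i 0 ≤ listMax l := by
  rcases lt_or_ge i l.length with h | h
  · exact le_listMax (getD_mem 0 h)
  · rw [getD_eq_default _ _ h]; exact Nat.zero_le _

lemma getD_insertIdx {α : Type*} {l : List α} {q : ℕ} {a : α} (hq : q ≤ l.length) (i : ℕ)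
    (d : α) : (l.insertIdx q a).getD i d =
      if i < q then l.getD i d else if i = q then a else l.getD (i - 1) d := by
  simp only [getD_eq_getElem?_getD, getElem?_insertIdx]
  split_ifs <;> simp_all

lemma getD_eraseIdx {α : Type*} (l : List α) (q i : ℕ) (d : α) :
    (l.eraseIdx q).getD i d = if i < q then l.getD i d else l.getD (i + 1) d := by
  simp only [getD_eq_getElem?_getD, getElem?_eraseIdx]
  split_ifs <;> rfl

lemma insertIdx_eq_take_append_cons_drop {α : Type*} (a : α) :
    ∀ (l : List α) (q : ℕ), q ≤ l.length → l.insertIdx q a = l.take q ++ a :: l.drop q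
  | _, 0, _ => rfl
  | [], _ + 1, h => by simp at h
  | b :: l, q + 1, h => by
    rw [insertIdx_succ_cons, insertIdx_eq_take_append_cons_drop a l q (by simpa using h)]
    rfl

section Patterns

lemma exists_getD_triple_iff_sublist (R : ℕ → ℕ → ℕ → Prop) (l : List ℕ) :
    (∃ i j k, i < j ∧ j < k ∧ k < l.length ∧ R (l.getD i 0) (l.getD j 0) (l.getD k 0)) ↔
      ∃ a b c, [a, b, c] <+ l ∧ R a b c := by
  constructor
  · rintro ⟨i, j, k, hij, hjk, hk, hR⟩
    refine ⟨_, _, _,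
      map_getElem_sublist (is := [⟨i, by omega⟩, ⟨j, by omega⟩, ⟨k, hk⟩]) ?_, ?_⟩
    · simp [hij, hjk, hij.trans hjk]
    · simpa [getD_eq_getElem, show i < l.length by omega, show j < l.length by omega, hk] using hR
  · rintro ⟨a, b, c, hs, hR⟩
    obtain ⟨is, his, hp⟩ := sublist_eq_map_getElem hs
    match is, his, hp with
    | [i, j, k], his, hp =>
      simp only [map_cons, map_nil, cons.injEq, and_true] at his
      simp only [pairwise_cons, mem_cons, forall_eq_or_imp, Fin.lt_def] at hp
      refine ⟨i, j, k, by simp_all, by simp_all, k.2, ?_⟩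
      simpa [getD_eq_getElem, his] using hR

lemma contains102_iff_sublist {l : List ℕ} :
    Contains102 l ↔ ∃ a b c, [a, b, c] <+ l ∧ b < a ∧ a < c :=
  exists_getD_triple_iff_sublist (fun a b c => b < a ∧ a < c) l

lemma contains000_iff_sublist {l : List ℕ} :
    Contains000 l ↔ ∃ a b c, [a, b, c] <+ l ∧ a = b ∧ b = c :=
  exists_getD_triple_iff_sublist (fun a b c => a = b ∧ b = c) l

lemma contains000_iff_exists_three_le_count {l : List ℕ} :
    Contains000 l ↔ ∃ x, 3 ≤ l.count x := by
  simp only [contains000_iff_sublist, ← replicate_sublist_iff]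
  constructor
  · rintro ⟨a, _, _, hs, rfl, rfl⟩; exact ⟨a, hs⟩
  · rintro ⟨x, hs⟩; exact ⟨x, x, x, hs, rfl, rfl⟩

lemma contains102_of_sublist {l l' : List ℕ} (h : l <+ l') (hl : Contains102 l) :
    Contains102 l' := by
  obtain ⟨a, b, c, hs, hR⟩ := contains102_iff_sublist.1 hl
  exact contains102_iff_sublist.2 ⟨a, b, c, hs.trans h, hR⟩

lemma contains000_of_sublist {l l' : List ℕ} (h : l <+ l') (hl : Contains000 l) :
    Contains000 l' := by
  obtain ⟨a, b, c, hs, hR⟩ := contains000_iff_sublist.1 hl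
  exact contains000_iff_sublist.2 ⟨a, b, c, hs.trans h, hR⟩

lemma not_contains000_iff_count_le_two {l : List ℕ} :
    ¬Contains000 l ↔ ∀ x, l.count x ≤ 2 := by
  simp [contains000_iff_exists_three_le_count, Nat.lt_succ_iff]

lemma two_le_count_of_getD_eq {l : List ℕ} {i j x : ℕ} (hij : i < j) (hj : j < l.length)
    (hi : l.getD i 0 = x) (hj' : l.getD j 0 = x) : 2 ≤ l.count x := by
  have hi' : i < l.length := by omega
  rw [getD_eq_getElem _ _ hi'] at hi
  rw [getD_eq_getElem _ _ hj] at hj'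
  subst hi
  rw [← replicate_sublist_iff]
  convert map_getElem_sublist (is := [⟨i, hi'⟩, ⟨j, hj⟩]) (by simpa using hij)
  simp [hj']

/-- An occurrence of `102` through the new entry must use it as its `2`, and the copy of `a`
in `d` serves equally well. -/
lemma not_contains102_append_cons {t d : List ℕ} {a : ℕ} (h : ¬Contains102 (t ++ d))
    (hmax : ∀ x ∈ t ++ d, x ≤ a) (ha : a ∈ d) : ¬Contains102 (t ++ a :: d) := by
  rw [contains102_iff_sublist] at h ⊢
  rintro ⟨x, y, z, hs, hyx, hxz⟩
  have hz : z ≤ a := by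
    rcases mem_append.1 (hs.subset (by simp : z ∈ [x, y, z])) with hz | hz
    · exact hmax z (mem_append_left _ hz)
    · rcases mem_cons.1 hz with rfl | hz
      · exact le_rfl
      · exact hmax z (mem_append_right _ hz)
  obtain ⟨r₁, r₂, hr, h₁, h₂⟩ := sublist_append_iff.1 hs
  rcases sublist_cons_iff.1 h₂ with h₂ | ⟨r, rfl, -⟩
  · exact h ⟨x, y, z, hr ▸ h₁.append h₂, hyx, hxz⟩
  · rcases r₁ with _ | ⟨_, _ | ⟨_, _ | ⟨_, _⟩⟩⟩ <;>
      simp only [nil_append, cons_append, cons.injEq] at hr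
    · omega
    · omega
    · obtain ⟨rfl, rfl, rfl, -⟩ := hr
      exact h ⟨x, y, z, h₁.append (singleton_sublist.2 ha), hyx, hxz⟩
    · simp at hr

end Patterns

lemma toFinset_insertIdx_of_mem {α : Type*} [DecidableEq α] {l : List α} {q : ℕ} {a : α}
    (hq : q ≤ l.length) (ha : a ∈ l) : (l.insertIdx q a).toFinset = l.toFinset := by
  rw [toFinset_eq_of_perm _ _ (perm_insertIdx a l hq), toFinset_cons,
    Finset.insert_eq_of_mem (mem_toFinset.2 ha)]

lemma count_insertIdx {α : Type*} [DecidableEq α] {l : List α} {q : ℕ} {a : α}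
    (hq : q ≤ l.length) (x : α) :
    (l.insertIdx q a).count x = l.count x + if a = x then 1 else 0 := by
  rw [(perm_insertIdx a l hq).count_eq, count_cons]
  simp

lemma listMax_insertIdx_of_mem {l : List ℕ} {q a : ℕ} (hq : q ≤ l.length) (ha : a ∈ l) :
    listMax (l.insertIdx q a) = listMax l := by
  rw [listMax_perm (perm_insertIdx a l hq), listMax_cons, max_eq_right (le_listMax ha)]

section InvSeq

lemma IsInvSeq.insertIdx {l : List ℕ} {q a : ℕ} (hl : IsInvSeq l) (ha : a ≤ q)
    (hq : q ≤ l.length) : IsInvSeq (l.insertIdx q a) := by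
  intro i hi
  rw [length_insertIdx_of_le_length hq] at hi
  rw [getD_insertIdx hq]
  split_ifs
  · exact hl i (by omega)
  · omega
  · have := hl (i - 1) (by omega); omega

lemma IsInvSeq.eraseIdx {l : List ℕ} {q : ℕ} (hl : IsInvSeq l) (hq : listMax l ≤ q) :
    IsInvSeq (l.eraseIdx q) := by
  intro i hi
  rw [getD_eraseIdx]
  split_ifs with h
  · exact hl i (hi.trans_le (eraseIdx_sublist l q).length_le)
  · exact (getD_le_listMax l _).trans (hq.trans (not_lt.1 h))

lemma IsInvSeq.notMem_take {l : List ℕ} (hl : IsInvSeq l) (x : ℕ) : x ∉ l.take x := by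
  rw [mem_take_iff_getElem]
  rintro ⟨j, hj, hx⟩
  have := hl j (by omega)
  rw [getD_eq_getElem _ _ (by omega)] at this
  omega

/-- Both copies of `x` sit at positions `≥ x`. -/
lemma IsInvSeq.add_one_lt_length {l : List ℕ} {x : ℕ} (hl : IsInvSeq l)
    (h : 2 ≤ l.count x) : x + 1 < l.length := by
  have hdrop : l.count x = (l.drop x).count x := by
    rw [← take_append_drop x l, count_append, count_eq_zero.2 (hl.notMem_take x), zero_add,
      take_append_drop]
  have := (l.drop x).count_le_length (a := x)
  simp only [length_drop] at this
  omega

lemma IsInvSeq.listMax_lt_length {l : List ℕ} (hl : IsInvSeq l) (hne : l ≠ []) :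
    listMax l < l.length := by
  obtain ⟨i, hi, h⟩ := mem_iff_getElem.1 (listMax_mem hne)
  have := hl i hi
  rw [getD_eq_getElem _ _ hi, h] at this
  omega

end InvSeq

section Prmx0

lemma prmx0_lt_length : ∀ {l : List ℕ}, l ≠ [] → prmx0 l < l.length
  | [], h => absurd rfl h
  | [_], _ => by simp [prmx0]
  | a :: b :: t, _ => by
    have := prmx0_lt_length (l := b :: t) (cons_ne_nil _ _)
    simp only [prmx0, length_cons] at this ⊢
    split_ifs <;> omega

lemma getD_le_getD_of_le_prmx0 : ∀ {l : List ℕ} {i j : ℕ}, i ≤ j → j ≤ prmx0 l →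
    l.getD i 0 ≤ l.getD j 0
  | [], _, _, _, _ => by simp
  | [_], i, j, hij, hj => by
    obtain rfl : j = 0 := by simpa [prmx0] using hj
    obtain rfl : i = 0 := by omega
    exact le_rfl
  | a :: b :: t, i, j, hij, hj => by
    by_cases hba : b < a
    · obtain rfl : j = 0 := by simpa [prmx0, hba] using hj
      obtain rfl : i = 0 := by omega
      exact le_rfl
    rw [prmx0, if_neg hba] at hj
    match i, j with
    | 0, 0 => exact le_rfl
    | 0, j + 1 =>
      exact (not_lt.1 hba).trans
        (getD_le_getD_of_le_prmx0 (l := b :: t) (Nat.zero_le j) (by omega))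
    | i + 1, j + 1 => exact getD_le_getD_of_le_prmx0 (l := b :: t) (by omega) (by omega)
    | _ + 1, 0 => omega

lemma getD_prmx0_add_one_lt : ∀ {l : List ℕ}, prmx0 l + 1 < l.length →
    l.getD (prmx0 l + 1) 0 < l.getD (prmx0 l) 0
  | [], h => by simp at h
  | [_], h => by simp [prmx0] at h
  | a :: b :: t, h => by
    by_cases hba : b < a
    · simp [prmx0, hba]
    · rw [prmx0, if_neg hba] at h ⊢
      exact getD_prmx0_add_one_lt (l := b :: t) (by simpa using h)

lemma prmx0_eq_of_getD_add_one_lt : ∀ {l : List ℕ} {p : ℕ}, p + 1 < l.length →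
    (∀ i < p, l.getD i 0 ≤ l.getD (i + 1) 0) → l.getD (p + 1) 0 < l.getD p 0 → prmx0 l = p
  | [], _, h, _, _ => by simp at h
  | [_], _, h, _, _ => by simp at h
  | a :: b :: t, 0, _, _, hd => by simpa [prmx0] using hd
  | a :: b :: t, p + 1, h, hmono, hd => by
    have hab : a ≤ b := by simpa using hmono 0 (Nat.succ_pos p)
    rw [prmx0, if_neg (not_lt.2 hab),
      prmx0_eq_of_getD_add_one_lt (l := b :: t) (p := p) (by simpa using h)
        (fun i hi => by simpa using hmono (i + 1) (by omega)) (by simpa using hd)]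

/-- An entry after the first descent exceeding its top would complete a `102` with the
descent. -/
lemma getD_prmx0_eq_listMax {l : List ℕ} (h102 : ¬Contains102 l) :
    l.getD (prmx0 l) 0 = listMax l := by
  refine le_antisymm (getD_le_listMax l _) (listMax_le_iff.2 fun x hx => ?_)
  obtain ⟨k, hk, rfl⟩ := mem_iff_getElem.1 hx
  rw [← getD_eq_getElem l 0 hk]
  rcases le_or_gt k (prmx0 l) with hkp | hkp
  · exact getD_le_getD_of_le_prmx0 hkp le_rfl
  by_contra! hgt
  have hdesc := getD_prmx0_add_one_lt (l := l) (by omega)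
  rcases eq_or_lt_of_le (show prmx0 l + 1 ≤ k by omega) with rfl | hk'
  · omega
  · exact h102 ⟨prmx0 l, prmx0 l + 1, k, by omega, hk', hk, hdesc, hgt⟩

lemma listMax_le_prmx0 {l : List ℕ} (hinv : IsInvSeq l) (h102 : ¬Contains102 l) :
    listMax l ≤ prmx0 l := by
  rcases eq_or_ne l [] with rfl | hne
  · exact le_rfl
  · exact getD_prmx0_eq_listMax h102 ▸ hinv _ (prmx0_lt_length hne)

lemma invRank_eq_zero_iff {l : List ℕ} (hinv : IsInvSeq l) (h102 : ¬Contains102 l) :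
    invRank l = 0 ↔ prmx0 l = listMax l := by
  have := listMax_le_prmx0 hinv h102
  unfold invRank
  omega

end Prmx0

def rankZeroAvoiders (m : ℕ) : Set (List ℕ) :=
  {l | IsInvSeq l ∧ ¬Contains102 l ∧ ¬Contains000 l ∧ l.toFinset.card = m ∧ invRank l = 0}

def uniqueMaxAvoiders (m : ℕ) : Set (List ℕ) :=
  {l | IsInvSeq l ∧ ¬Contains102 l ∧ ¬Contains000 l ∧ l.toFinset.card = m ∧
    l.count (listMax l) = 1}

lemma count_listMax_eq_one_or_two {l : List ℕ} (hne : l ≠ []) (h000 : ¬Contains000 l) :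
    l.count (listMax l) = 1 ∨ l.count (listMax l) = 2 := by
  have h₁ := count_pos_iff.2 (listMax_mem hne)
  have h₂ := not_contains000_iff_count_le_two.1 h000 (listMax l)
  omega

section Erase

variable {e : List ℕ}

lemma getD_listMax_of_invRank_eq_zero (hinv : IsInvSeq e) (h102 : ¬Contains102 e)
    (hrk : invRank e = 0) : e.getD (listMax e) 0 = listMax e := by
  conv_lhs => rw [← (invRank_eq_zero_iff hinv h102).1 hrk]
  exact getD_prmx0_eq_listMax h102

lemma cons_eraseIdx_listMax_perm (hinv : IsInvSeq e) (h102 : ¬Contains102 e)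
    (hrk : invRank e = 0) (hne : e ≠ []) :
    listMax e :: e.eraseIdx (listMax e) ~ e := by
  have hM := hinv.listMax_lt_length hne
  have h := getElem_cons_eraseIdx_perm hM
  rwa [← getD_eq_getElem _ 0 hM, getD_listMax_of_invRank_eq_zero hinv h102 hrk] at h

lemma insertIdx_eraseIdx_listMax (hinv : IsInvSeq e) (h102 : ¬Contains102 e)
    (hrk : invRank e = 0) (hne : e ≠ []) :
    (e.eraseIdx (listMax e)).insertIdx (listMax e) (listMax e) = e := by
  have hM := hinv.listMax_lt_length hne
  have h := insertIdx_eraseIdx_getElem hM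
  rwa [← getD_eq_getElem _ 0 hM, getD_listMax_of_invRank_eq_zero hinv h102 hrk] at h

lemma count_eraseIdx_listMax (hinv : IsInvSeq e) (h102 : ¬Contains102 e)
    (hrk : invRank e = 0) (hc : e.count (listMax e) = 2) :
    (e.eraseIdx (listMax e)).count (listMax e) = 1 := by
  have hne : e ≠ [] := ne_nil_of_count_pos (hc ▸ two_pos)
  have := (cons_eraseIdx_listMax_perm hinv h102 hrk hne).count_eq (listMax e)
  rw [count_cons_self] at this
  omega

lemma listMax_eraseIdx_listMax (hinv : IsInvSeq e) (h102 : ¬Contains102 e)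
    (hrk : invRank e = 0) (hc : e.count (listMax e) = 2) :
    listMax (e.eraseIdx (listMax e)) = listMax e := by
  have hne : e ≠ [] := ne_nil_of_count_pos (hc ▸ two_pos)
  have hmem : listMax e ∈ e.eraseIdx (listMax e) :=
    count_pos_iff.1 (by rw [count_eraseIdx_listMax hinv h102 hrk hc]; exact Nat.one_pos)
  have := listMax_perm (cons_eraseIdx_listMax_perm hinv h102 hrk hne)
  rwa [listMax_cons, max_eq_right (le_listMax hmem)] at this

/-- The erased copy of the maximum sits at the first descent of `e`, so after deleting it
position `max e` carries a smaller entry. -/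
lemma invRank_eraseIdx_listMax_ne_zero (hinv : IsInvSeq e) (h102 : ¬Contains102 e)
    (hrk : invRank e = 0) (hc : e.count (listMax e) = 2) :
    invRank (e.eraseIdx (listMax e)) ≠ 0 := by
  have hp := (invRank_eq_zero_iff hinv h102).1 hrk
  have hdesc := getD_prmx0_add_one_lt (hp ▸ hinv.add_one_lt_length hc.ge)
  rw [hp, getD_listMax_of_invRank_eq_zero hinv h102 hrk] at hdesc
  have h102' : ¬Contains102 (e.eraseIdx (listMax e)) :=
    fun h => h102 (contains102_of_sublist (eraseIdx_sublist _ _) h)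
  rw [Ne, invRank_eq_zero_iff (hinv.eraseIdx le_rfl) h102',
    listMax_eraseIdx_listMax hinv h102 hrk hc]
  intro hp'
  have := getD_prmx0_eq_listMax h102'
  rw [hp', listMax_eraseIdx_listMax hinv h102 hrk hc, getD_eraseIdx, if_neg (lt_irrefl _)]
    at this
  omega

lemma eraseIdx_listMax_mem_uniqueMaxAvoiders {m : ℕ} (he : e ∈ rankZeroAvoiders m)
    (hc : e.count (listMax e) = 2) : e.eraseIdx (listMax e) ∈ uniqueMaxAvoiders m := by
  obtain ⟨hinv, h102, h000, hcard, hrk⟩ := he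
  have hne : e ≠ [] := ne_nil_of_count_pos (hc ▸ two_pos)
  have hcount := count_eraseIdx_listMax hinv h102 hrk hc
  refine ⟨hinv.eraseIdx le_rfl, fun h => h102 (contains102_of_sublist (eraseIdx_sublist _ _) h),
    fun h => h000 (contains000_of_sublist (eraseIdx_sublist _ _) h), ?_, ?_⟩
  · rw [← hcard, ← toFinset_eq_of_perm _ _ (cons_eraseIdx_listMax_perm hinv h102 hrk hne),
      toFinset_cons, Finset.insert_eq_of_mem (mem_toFinset.2 (count_pos_iff.1 (by omega)))]
  · rwa [listMax_eraseIdx_listMax hinv h102 hrk hc]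

end Erase

section Insert

variable {g : List ℕ}

lemma getD_listMax_lt_listMax (h102 : ¬Contains102 g) (hc : g.count (listMax g) = 1)
    (hrk : invRank g ≠ 0) : g.getD (listMax g) 0 < listMax g := by
  have hlt : listMax g < prmx0 g := Nat.sub_ne_zero_iff_lt.1 hrk
  have hne : g ≠ [] := ne_nil_of_count_pos (hc ▸ Nat.one_pos)
  refine lt_of_le_of_ne (getD_le_listMax g _) fun h => ?_
  have := two_le_count_of_getD_eq hlt (prmx0_lt_length hne) h (getD_prmx0_eq_listMax h102)
  omega

lemma prmx0_insertIdx_listMax (h102 : ¬Contains102 g) (hc : g.count (listMax g) = 1)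
    (hrk : invRank g ≠ 0) : prmx0 (g.insertIdx (listMax g) (listMax g)) = listMax g := by
  have hlt : listMax g < prmx0 g := Nat.sub_ne_zero_iff_lt.1 hrk
  have hne : g ≠ [] := ne_nil_of_count_pos (hc ▸ Nat.one_pos)
  have hlen := prmx0_lt_length hne
  have hq : listMax g ≤ g.length := by omega
  apply prmx0_eq_of_getD_add_one_lt
  · rw [length_insertIdx_of_le_length hq]; omega
  · intro i hi
    rw [getD_insertIdx hq, getD_insertIdx hq, if_pos hi]
    split_ifs
    · exact getD_le_getD_of_le_prmx0 (Nat.le_succ i) (by omega)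
    · exact getD_le_listMax g i
    · omega
  · rw [getD_insertIdx hq, getD_insertIdx hq, if_neg (by omega), if_neg (by omega),
      if_neg (lt_irrefl _), if_pos rfl, Nat.add_sub_cancel]
    exact getD_listMax_lt_listMax h102 hc hrk

lemma insertIdx_listMax_mem_rankZeroAvoiders {m : ℕ} (hg : g ∈ uniqueMaxAvoiders m)
    (hrk : invRank g ≠ 0) : g.insertIdx (listMax g) (listMax g) ∈ rankZeroAvoiders m := by
  obtain ⟨hinv, h102, h000, hcard, hc⟩ := hg
  have hlt : listMax g < prmx0 g := Nat.sub_ne_zero_iff_lt.1 hrk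
  have hne : g ≠ [] := ne_nil_of_count_pos (hc ▸ Nat.one_pos)
  have hlen := prmx0_lt_length hne
  have hq : listMax g ≤ g.length := by omega
  have hmem := listMax_mem hne
  refine ⟨hinv.insertIdx le_rfl hq, ?_, ?_, ?_, ?_⟩
  · have hdrop : listMax g ∈ g.drop (listMax g) := by
      have := getD_prmx0_eq_listMax h102
      rw [getD_eq_getElem _ _ hlen] at this
      exact mem_drop_iff_getElem.2
        ⟨prmx0 g - listMax g, by omega, by simpa [Nat.add_sub_cancel' hlt.le]⟩
    rw [insertIdx_eq_take_append_cons_drop _ _ _ hq]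
    refine not_contains102_append_cons (by rwa [take_append_drop])
      (fun x hx => le_listMax (by rwa [take_append_drop] at hx)) hdrop
  · refine not_contains000_iff_count_le_two.2 fun x => ?_
    have := not_contains000_iff_count_le_two.1 h000 x
    rw [count_insertIdx hq]
    split_ifs with h
    · subst h; omega
    · omega
  · rwa [toFinset_insertIdx_of_mem hq hmem]
  · rw [invRank, prmx0_insertIdx_listMax h102 hc hrk, listMax_insertIdx_of_mem hq hmem,
      Nat.sub_self]

lemma count_listMax_insertIdx_listMax (hinv : IsInvSeq g) (hne : g ≠ [])
    (hc : g.count (listMax g) = 1) :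
    (g.insertIdx (listMax g) (listMax g)).count
      (listMax (g.insertIdx (listMax g) (listMax g))) = 2 := by
  have hq := (hinv.listMax_lt_length hne).le
  rw [listMax_insertIdx_of_mem hq (listMax_mem hne), count_insertIdx hq, hc, if_pos rfl]

end Insert

def eraseMaxCopy (l : List ℕ) : List ℕ :=
  if l.count (listMax l) = 1 then l else l.eraseIdx (prmx0 l)

def insertMaxCopy (l : List ℕ) : List ℕ :=
  if invRank l = 0 then l else l.insertIdx (listMax l) (listMax l)

section Bijection

variable {m : ℕ}

lemma ne_nil_of_toFinset_card_eq (hm : 1 ≤ m) {l : List ℕ} (h : l.toFinset.card = m) :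
    l ≠ [] :=
  ne_nil_of_length_pos (hm.trans (h ▸ toFinset_card_le l))

lemma mapsTo_eraseMaxCopy (hm : 1 ≤ m) :
    Set.MapsTo eraseMaxCopy (rankZeroAvoiders m) (uniqueMaxAvoiders m) := by
  rintro e ⟨hinv, h102, h000, hcard, hrk⟩
  rcases count_listMax_eq_one_or_two (ne_nil_of_toFinset_card_eq hm hcard) h000 with hc | hc
  · rw [eraseMaxCopy, if_pos hc]
    exact ⟨hinv, h102, h000, hcard, hc⟩
  · rw [eraseMaxCopy, hc, if_neg (by decide), (invRank_eq_zero_iff hinv h102).1 hrk]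
    exact eraseIdx_listMax_mem_uniqueMaxAvoiders ⟨hinv, h102, h000, hcard, hrk⟩ hc

lemma mapsTo_insertMaxCopy :
    Set.MapsTo insertMaxCopy (uniqueMaxAvoiders m) (rankZeroAvoiders m) := by
  intro g hg
  by_cases hrk : invRank g = 0
  · obtain ⟨hinv, h102, h000, hcard, -⟩ := hg
    rw [insertMaxCopy, if_pos hrk]
    exact ⟨hinv, h102, h000, hcard, hrk⟩
  · rw [insertMaxCopy, if_neg hrk]
    exact insertIdx_listMax_mem_rankZeroAvoiders hg hrk

lemma invOn_insertMaxCopy_eraseMaxCopy (hm : 1 ≤ m) :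
    Set.InvOn insertMaxCopy eraseMaxCopy (rankZeroAvoiders m) (uniqueMaxAvoiders m) := by
  constructor
  · rintro e ⟨hinv, h102, h000, hcard, hrk⟩
    have hne := ne_nil_of_toFinset_card_eq hm hcard
    rcases count_listMax_eq_one_or_two hne h000 with hc | hc
    · rw [eraseMaxCopy, if_pos hc, insertMaxCopy, if_pos hrk]
    · rw [eraseMaxCopy, hc, if_neg (by decide), (invRank_eq_zero_iff hinv h102).1 hrk,
        insertMaxCopy, if_neg (invRank_eraseIdx_listMax_ne_zero hinv h102 hrk hc),
        listMax_eraseIdx_listMax hinv h102 hrk hc, insertIdx_eraseIdx_listMax hinv h102 hrk hne]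
  · rintro g ⟨hinv, h102, -, hcard, hc⟩
    by_cases hrk : invRank g = 0
    · rw [insertMaxCopy, if_pos hrk, eraseMaxCopy, if_pos hc]
    · rw [insertMaxCopy, if_neg hrk, eraseMaxCopy,
        count_listMax_insertIdx_listMax hinv (ne_nil_of_toFinset_card_eq hm hcard) hc,
        if_neg (by decide), prmx0_insertIdx_listMax h102 hc hrk, eraseIdx_insertIdx_self]

lemma bijOn_eraseMaxCopy (hm : 1 ≤ m) :
    Set.BijOn eraseMaxCopy (rankZeroAvoiders m) (uniqueMaxAvoiders m) :=
  (invOn_insertMaxCopy_eraseMaxCopy hm).bijOn (mapsTo_eraseMaxCopy hm) mapsTo_insertMaxCopy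

end Bijection

theorem stmt15 (m : ℕ) (hm : 1 ≤ m) :
    Set.BijOn
      (fun l : List ℕ =>
        if List.count (listMax l) l = 1 then l else l.eraseIdx (prmx0 l))
      {l : List ℕ | IsInvSeq l ∧ ¬ Contains102 l ∧ ¬ Contains000 l ∧
        l.toFinset.card = m ∧ invRank l = 0}
      {l : List ℕ | IsInvSeq l ∧ ¬ Contains102 l ∧ ¬ Contains000 l ∧
        l.toFinset.card = m ∧ List.count (listMax l) l = 1} ∧
    ({l : List ℕ | IsInvSeq l ∧ ¬ Contains102 l ∧ ¬ Contains000 l ∧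
        l.toFinset.card = m ∧ invRank l = 0}).ncard
      = ({l : List ℕ | IsInvSeq l ∧ ¬ Contains102 l ∧ ¬ Contains000 l ∧
        l.toFinset.card = m ∧ List.count (listMax l) l = 1}).ncard :=
  ⟨bijOn_eraseMaxCopy hm, (bijOn_eraseMaxCopy hm).ncard_eq⟩
end

section
/- For every integer m ≥ 1, the following binomial identity holds: Σ_{n=m}^{2m} (1/m)·C(m, n−m)·Σ_{j=0}^{n−m} C(n−m, j)·C(n+m−j, 2m+j+1) = (1/(3m+1))·C(4m, m). -/
/-! Since `C(n, r)` is the coefficient of `X ^ e` in `(1 + X) ^ n * X ^ d` whenever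
`n + d = e + r`, the inner sum over `j` (with `k = n - m`) is the coefficient of `X ^ (m - 1)` in
`(1 + X) ^ (2 * m) * (1 + X + X ^ 2) ^ k * X ^ (m - k)`. Summing against `C(m, k)` gives
`(1 + X) ^ (2 * m) * (1 + 2 * X + X ^ 2) ^ m = (1 + X) ^ (4 * m)`, so the double sum is
`C(4m, m - 1) = m / (3m + 1) * C(4m, m)`. -/

open Polynomial Finset

theorem Polynomial.coeff_one_add_X_pow_mul_X_pow {R : Type*} [Semiring R] {n d e r : ℕ}
    (h : n + d = e + r) : ((1 + X : R[X]) ^ n * X ^ d).coeff e = (n.choose r : R) := by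
  rw [coeff_mul_X_pow', coeff_one_add_X_pow]
  split_ifs with hde
  · rw [← Nat.choose_symm (by omega)]
    congr 2
    omega
  · rw [Nat.choose_eq_zero_of_lt (by omega), Nat.cast_zero]

theorem coeff_mul_one_add_X_add_X_sq_pow {m k : ℕ} (hm : 1 ≤ m) (hk : k ≤ m) :
    ((1 + X : ℕ[X]) ^ (2 * m) * (1 + X + X ^ 2) ^ k * X ^ (m - k)).coeff (m - 1)
      = ∑ j ∈ range (k + 1), k.choose j * (2 * m + k - j).choose (2 * m + j + 1) := by
  rw [add_comm (1 + X : ℕ[X]) (X ^ 2), add_pow (X ^ 2) (1 + X) k, mul_sum, sum_mul,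
    finsetSum_coeff]
  refine sum_congr rfl fun j hj => ?_
  have hjk : j ≤ k := Nat.lt_succ_iff.mp (mem_range.mp hj)
  have hsplit : (1 + X : ℕ[X]) ^ (2 * m) * ((X ^ 2) ^ j * (1 + X) ^ (k - j) * (k.choose j : ℕ[X]))
        * X ^ (m - k)
      = (k.choose j : ℕ[X]) * ((1 + X) ^ (2 * m + k - j) * X ^ (2 * j + (m - k))) := by
    rw [show 2 * m + k - j = 2 * m + (k - j) by omega, pow_add, ← pow_mul, pow_add]
    ring
  rw [hsplit, coeff_natCast_mul, coeff_one_add_X_pow_mul_X_pow (r := 2 * m + j + 1) (by omega),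
    Nat.cast_id, Nat.cast_id]

theorem sum_choose_mul_one_add_X_add_X_sq_pow_eq (m : ℕ) :
    ∑ k ∈ range (m + 1),
      (m.choose k : ℕ[X]) * ((1 + X : ℕ[X]) ^ (2 * m) * (1 + X + X ^ 2) ^ k * X ^ (m - k))
      = (1 + X) ^ (4 * m) := by
  calc _ = (1 + X : ℕ[X]) ^ (2 * m) * (1 + X + X ^ 2 + X) ^ m := by
        rw [add_pow (1 + X + X ^ 2) X m, mul_sum]
        refine sum_congr rfl fun k _ => ?_
        ring
    _ = (1 + X) ^ (2 * m) * ((1 + X) ^ 2) ^ m := by ring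
    _ = (1 + X) ^ (4 * m) := by rw [← pow_mul, ← pow_add]; ring_nf

theorem sum_choose_mul_sum_choose_mul_choose {m : ℕ} (hm : 1 ≤ m) :
    ∑ k ∈ range (m + 1), m.choose k *
      ∑ j ∈ range (k + 1), k.choose j * (2 * m + k - j).choose (2 * m + j + 1)
      = (4 * m).choose (m - 1) := by
  have hcoeff := congrArg (coeff · (m - 1)) (sum_choose_mul_one_add_X_add_X_sq_pow_eq m)
  simp only [finsetSum_coeff, coeff_natCast_mul, coeff_one_add_X_pow, Nat.cast_id] at hcoeff
  rw [← hcoeff]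
  refine sum_congr rfl fun k hk => ?_
  rw [coeff_mul_one_add_X_add_X_sq_pow hm (Nat.lt_succ_iff.mp (mem_range.mp hk))]

theorem stmt18 (m : ℕ) (hm : 1 ≤ m) :
    ∑ n ∈ Finset.Icc m (2 * m),
      (1 / (m : ℚ)) * (Nat.choose m (n - m)) *
        ∑ j ∈ Finset.range (n - m + 1),
          (Nat.choose (n - m) j : ℚ) * (Nat.choose (n + m - j) (2 * m + j + 1))
      = (1 / (3 * (m : ℚ) + 1)) * (Nat.choose (4 * m) m) := by
  have hchoose : ((4 * m).choose (m - 1) : ℚ) * (3 * m + 1) = (4 * m).choose m * m := by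
    have h := Nat.choose_succ_right_eq (4 * m) (m - 1)
    rw [Nat.sub_add_cancel hm, show 4 * m - (m - 1) = 3 * m + 1 by omega] at h
    exact_mod_cast h.symm
  have hm0 : (m : ℚ) ≠ 0 := Nat.cast_ne_zero.mpr (by omega)
  calc _ = 1 / (m : ℚ) * ((4 * m).choose (m - 1) : ℕ) := by
        rw [← Ico_add_one_right_eq_Icc, sum_Ico_eq_sum_range,
          ← sum_choose_mul_sum_choose_mul_choose hm, Nat.cast_sum, mul_sum]
        refine sum_congr (by congr 1; omega) fun k _ => ?_
        rw [Nat.add_sub_cancel_left, show m + k + m = 2 * m + k by omega]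
        push_cast
        ring
    _ = _ := by
        field_simp
        linear_combination hchoose
end

section
/- Let b ∈ ℚ[[y]] be a formal power series satisfying b = 1 + y·b⁴. Then for every integer k ≥ 1 and every integer m ≥ 0, the coefficient of y^m in b^k equals (k/(4m+k))·C(4m+k, m). -/
/-!
Write `b = 1 + X b^d`. Multiplying `b^k` by `b` gives `b^(k+1) = b^k + X b^(k+d)`, hence
`[X^(m+1)] b^(k+1) = [X^(m+1)] b^k + [X^m] b^(k+d)`. Together with `[X^0] b^k = 1` and
`[X^(m+1)] b^0 = 0`, this recursion determines every coefficient by induction on `m` and then on `k`.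
The Raney numbers `k / (d m + k) * C(d m + k, m)` satisfy the same recursion, which reduces to
`C(N+1, m+1) (m+1) = (N+1) C(N, m)` and `C(N, m+1) (m+1) = C(N, m) (N - m)`.
-/

open PowerSeries

/-- The Raney (two-parameter Fuss–Catalan) number; `raney d 0 0 = 0` by division by zero, whereas
`[X^0] b^0 = 1`, which is why the coefficient formula needs `k ≠ 0` or `m ≠ 0`. -/
def raney (d k m : ℕ) : ℚ :=
  k / (d * m + k : ℕ) * (d * m + k).choose m

@[simp]
lemma raney_zero_left (d m : ℕ) : raney d 0 m = 0 := by
  simp [raney]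

lemma raney_zero_right (d : ℕ) {k : ℕ} (hk : k ≠ 0) : raney d k 0 = 1 := by
  simp [raney, hk]

lemma raney_succ_succ {d : ℕ} (hd : 0 < d) (k m : ℕ) :
    raney d (k + 1) (m + 1) = raney d k (m + 1) + raney d (k + d) m := by
  obtain ⟨N, hN⟩ : ∃ N, d * (m + 1) + k = N := ⟨_, rfl⟩
  have hmN : m < N := by nlinarith
  have h_succ : ((N + 1).choose (m + 1) : ℚ) = (N + 1) * N.choose m / (m + 1) := by
    rw [eq_div_iff (by positivity)]
    exact_mod_cast (Nat.add_one_mul_choose_eq N m).symm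
  have h_right : (N.choose (m + 1) : ℚ) = N.choose m * (N - m) / (m + 1) := by
    rw [eq_div_iff (by positivity), ← Nat.cast_sub hmN.le]
    exact_mod_cast Nat.choose_succ_right_eq N m
  have hN0 : (N : ℚ) ≠ 0 := by rw [← hN]; positivity
  simp only [raney, hN, show d * (m + 1) + (k + 1) = N + 1 by omega,
    show d * m + (k + d) = N by rw [← hN]; ring]
  rw [h_succ, h_right]
  field_simp
  rw [← hN]
  push_cast
  ring

section PowerSeries

variable {R : Type*} [CommSemiring R] {b : R⟦X⟧} {d : ℕ}

lemma constantCoeff_eq_one_of_eq_one_add_X_mul (hb : b = 1 + X * b ^ d) :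
    constantCoeff b = 1 := by
  rw [hb]; simp

lemma pow_succ_of_eq_one_add_X_mul (hb : b = 1 + X * b ^ d) (k : ℕ) :
    b ^ (k + 1) = b ^ k + X * b ^ (k + d) := by
  calc b ^ (k + 1) = b ^ k * (1 + X * b ^ d) := by rw [pow_succ, ← hb]
    _ = b ^ k + X * b ^ (k + d) := by ring

lemma coeff_succ_pow_succ_of_eq_one_add_X_mul (hb : b = 1 + X * b ^ d) (k m : ℕ) :
    coeff (m + 1) (b ^ (k + 1)) = coeff (m + 1) (b ^ k) + coeff m (b ^ (k + d)) := by
  rw [pow_succ_of_eq_one_add_X_mul hb, map_add, coeff_succ_X_mul]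

end PowerSeries

section Raney

variable {K : Type*} [Field K] {b : K⟦X⟧} {d : ℕ}

lemma coeff_zero_pow_of_eq_one_add_X_mul (hb : b = 1 + X * b ^ d) {k : ℕ} (hk : k ≠ 0) :
    coeff 0 (b ^ k) = raney d k 0 := by
  simp [constantCoeff_eq_one_of_eq_one_add_X_mul hb, raney_zero_right d hk]

variable [CharZero K]

lemma coeff_succ_pow_of_coeff_pow_add (hd : 0 < d) (hb : b = 1 + X * b ^ d) {m : ℕ}
    (hm : ∀ k, coeff m (b ^ (k + d)) = raney d (k + d) m) (k : ℕ) :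
    coeff (m + 1) (b ^ k) = raney d k (m + 1) := by
  induction k with
  | zero => simp
  | succ k ih =>
    rw [coeff_succ_pow_succ_of_eq_one_add_X_mul hb, ih, hm, raney_succ_succ hd, Rat.cast_add]

lemma coeff_succ_pow_eq_raney (hd : 0 < d) (hb : b = 1 + X * b ^ d) (m k : ℕ) :
    coeff (m + 1) (b ^ k) = raney d k (m + 1) := by
  induction m generalizing k with
  | zero =>
    exact coeff_succ_pow_of_coeff_pow_add hd hb
      (fun j ↦ coeff_zero_pow_of_eq_one_add_X_mul hb (by omega)) k
  | succ m ih => exact coeff_succ_pow_of_coeff_pow_add hd hb (fun j ↦ ih (j + d)) k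

theorem coeff_pow_eq_raney (hd : 0 < d) (hb : b = 1 + X * b ^ d) {k : ℕ} (hk : k ≠ 0) (m : ℕ) :
    coeff m (b ^ k) = raney d k m := by
  cases m with
  | zero => exact coeff_zero_pow_of_eq_one_add_X_mul hb hk
  | succ m => exact coeff_succ_pow_eq_raney hd hb m k

end Raney

theorem stmt19 (b : PowerSeries ℚ) (hb : b = 1 + PowerSeries.X * b ^ 4) :
    ∀ k m : ℕ, 1 ≤ k →
      PowerSeries.coeff (R := ℚ) m (b ^ k)
        = ((k : ℚ) / (4 * (m : ℚ) + (k : ℚ))) * (Nat.choose (4 * m + k) m) := by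
  intro k m hk
  rw [coeff_pow_eq_raney (by norm_num) hb (by omega), Rat.cast_id, raney]
  push_cast
  rfl
end
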